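/- Let p ≥ 1 be an integer, M_p > 0, c > 0, σ > 0, Δ_0 > 0, and consider the restarted scheme with q = p+1: Δ_k = Δ_0 · 2^{−k} and iteration counts N_k = max{⌈(2 c (p+1) M_p/σ)^{2/(3p+1)}⌉, 1}, independently of k. Suppose f : ℝ^n → ℝ is differentiable and uniformly convex of degree p+1 with parameter σ, with global minimizer x*, f(z_0) − f(x*) ≤ Δ_0, and the sequence (z_k) satisfies f(z_{k+1}) − f(x*) ≤ c M_p ∥z_k − x*∥^{p+1} / N_k^{(3p+1)/2} for all k ≥ 0. Then for every ε with 0 < ε ≤ Δ_0 and every integer k ≥ log₂(Δ_0/ε), one has f(z_k) − f(x*) ≤ ε, and the total number of inner steps satisfies Σ_{i=0}^{k−1} N_i ≤ ((2 c (p+1))^{2/(3p+1)} (M_p/σ)^{2/(3p+1)} + 1) · k. -/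
import Mathlib


open scoped RealInnerProductSpace

/-- `f` is uniformly convex of degree `q` with parameter `σ`:
`f(y) ≥ f(x) + ⟨∇f(x), y - x⟩ + (σ/q)‖y - x‖^q` for all `x, y`. -/
def UniformlyConvexDeg {n : ℕ} (q σ : ℝ) (f : EuclideanSpace ℝ (Fin n) → ℝ) : Prop :=
  ∀ x y : EuclideanSpace ℝ (Fin n),
    f y ≥ f x + ⟪gradient f x, y - x⟫ + (σ / q) * ‖y - x‖ ^ q

/-- The `q = p+1` specialization of Theorem 3: each restart uses the same number of
inner iterations `N_k = max{⌈(2 c (p+1) M_p/σ)^{2/(3p+1)}⌉, 1}`; for every `0 < ε ≤ Δ_0`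
and every `k ≥ log₂(Δ_0/ε)` one has `f(z_k) - f(x_*) ≤ ε`, and the total number of inner
steps satisfies `∑_{i=0}^{k-1} N_i ≤ ((2c(p+1))^{2/(3p+1)} (M_p/σ)^{2/(3p+1)} + 1) k`. -/
theorem restarted_tensor_method_uniformly_convex_deg_p_plus_one {n : ℕ}
    (p : ℕ) (hp : 1 ≤ p) (Mp c σ Δ0 : ℝ)
    (hMp : 0 < Mp) (hc : 0 < c) (hσ : 0 < σ) (hΔ0 : 0 < Δ0)
    (f : EuclideanSpace ℝ (Fin n) → ℝ) (hdiff : Differentiable ℝ f)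
    (hucon : UniformlyConvexDeg ((p : ℝ) + 1) σ f)
    (xstar : EuclideanSpace ℝ (Fin n)) (hmin : ∀ w, f xstar ≤ f w)
    (z : ℕ → EuclideanSpace ℝ (Fin n)) (hz0 : f (z 0) - f xstar ≤ Δ0)
    (N : ℕ → ℕ)
    (hN : ∀ k : ℕ,
        N k = max (⌈(2 * c * ((p : ℝ) + 1) * Mp / σ) ^ (2 / (3 * (p : ℝ) + 1))⌉₊) 1)
    (hzk : ∀ k : ℕ, f (z (k + 1)) - f xstar
        ≤ c * Mp * ‖z k - xstar‖ ^ (p + 1) / (N k : ℝ) ^ ((3 * (p : ℝ) + 1) / 2)) :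
    ∀ ε : ℝ, 0 < ε → ε ≤ Δ0 → ∀ k : ℕ, (k : ℝ) ≥ Real.logb 2 (Δ0 / ε) →
      f (z k) - f xstar ≤ ε ∧
        (∑ i ∈ Finset.range k, (N i : ℝ))
          ≤ ((2 * c * ((p : ℝ) + 1)) ^ (2 / (3 * (p : ℝ) + 1))
              * (Mp / σ) ^ (2 / (3 * (p : ℝ) + 1)) + 1) * (k : ℝ) := by
  have hp1 : (0:ℝ) < (p:ℝ) + 1 := by positivity
  have h3p : (0:ℝ) < 3 * (p:ℝ) + 1 := by positivity
  set B : ℝ := 2 * c * ((p : ℝ) + 1) * Mp / σ with hB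
  have hBpos : 0 < B := by positivity
  set A : ℝ := B ^ (2 / (3 * (p : ℝ) + 1)) with hA
  have hApos : 0 < A := Real.rpow_pos_of_pos hBpos _
  -- gradient at the minimizer is zero
  have grad0 : gradient f xstar = 0 := by
    have hloc : IsLocalMin f xstar := IsMinOn.isLocalMin (fun w _ => hmin w) Filter.univ_mem
    have := hloc.fderiv_eq_zero
    simp [gradient, this]
  -- uniform convexity lower bound
  have hlow : ∀ y, σ / ((p:ℝ)+1) * ‖y - xstar‖ ^ (p+1) ≤ f y - f xstar := by
    intro y
    have h := hucon xstar y
    rw [grad0] at h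
    simp only [inner_zero_left] at h
    have hnorm : ‖y - xstar‖ ^ ((p:ℝ)+1) = ‖y - xstar‖ ^ (p+1) := by
      rw [show ((p:ℝ)+1) = ((p+1 : ℕ) : ℝ) by push_cast; ring, Real.rpow_natCast]
    rw [hnorm] at h
    linarith
  -- N bound below
  have hNge : ∀ k, A ≤ (N k : ℝ) := by
    intro k
    rw [hN k]
    have : A ≤ (⌈A⌉₊ : ℝ) := Nat.le_ceil A
    calc A ≤ (⌈A⌉₊ : ℝ) := this
      _ ≤ ((max ⌈A⌉₊ 1 : ℕ) : ℝ) := by exact_mod_cast Nat.le_max_left _ _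
  have hNpos : ∀ k, 0 < (N k : ℝ) := fun k => lt_of_lt_of_le hApos (hNge k)
  -- N^{(3p+1)/2} ≥ B
  have hNpow : ∀ k, B ≤ (N k : ℝ) ^ ((3 * (p:ℝ) + 1) / 2) := by
    intro k
    have h1 : A ^ ((3 * (p:ℝ) + 1) / 2) ≤ (N k : ℝ) ^ ((3 * (p:ℝ) + 1) / 2) :=
      Real.rpow_le_rpow hApos.le (hNge k) (by positivity)
    have h2 : A ^ ((3 * (p:ℝ) + 1) / 2) = B := by
      rw [hA, ← Real.rpow_mul hBpos.le]
      rw [show 2 / (3 * (p:ℝ) + 1) * ((3 * (p:ℝ) + 1) / 2) = 1 by field_simp]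
      exact Real.rpow_one B
    linarith
  -- halving step
  have hhalf : ∀ k, f (z (k+1)) - f xstar ≤ (f (z k) - f xstar) / 2 := by
    intro k
    have hDk : 0 ≤ f (z k) - f xstar := by linarith [hmin (z k)]
    have hnb : ‖z k - xstar‖ ^ (p+1) ≤ ((p:ℝ)+1) / σ * (f (z k) - f xstar) := by
      have h := hlow (z k)
      rw [div_mul_eq_mul_div, div_le_iff₀ hp1] at h
      rw [div_mul_eq_mul_div, le_div_iff₀ hσ]
      nlinarith
    have hNe : 0 < (N k : ℝ) ^ ((3 * (p:ℝ) + 1) / 2) := Real.rpow_pos_of_pos (hNpos k) _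
    calc f (z (k+1)) - f xstar
        ≤ c * Mp * ‖z k - xstar‖ ^ (p + 1) / (N k : ℝ) ^ ((3 * (p : ℝ) + 1) / 2) := hzk k
      _ ≤ c * Mp * (((p:ℝ)+1) / σ * (f (z k) - f xstar)) / B := by
          apply div_le_div₀ (by positivity) _ hBpos (hNpow k)
          have : 0 < c * Mp := by positivity
          nlinarith
      _ = (f (z k) - f xstar) / 2 := by
          rw [hB]; field_simp
  -- geometric decay
  have hgeo : ∀ k : ℕ, f (z k) - f xstar ≤ Δ0 * (1/2) ^ k := by
    intro k
    induction k with
    | zero => simpa using hz0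
    | succ k ih =>
        calc f (z (k+1)) - f xstar ≤ (f (z k) - f xstar) / 2 := hhalf k
          _ ≤ Δ0 * (1/2) ^ k / 2 := by linarith
          _ = Δ0 * (1/2) ^ (k+1) := by ring
  intro ε hε hεΔ k hk
  constructor
  · -- accuracy bound
    have h2k : Δ0 / ε ≤ (2:ℝ) ^ (k:ℝ) := by
      have := Real.rpow_le_rpow_left_iff (x := (2:ℝ)) (by norm_num : (1:ℝ) < 2)
        (y := Real.logb 2 (Δ0/ε)) (z := (k:ℝ)) |>.mpr hk
      rwa [Real.rpow_logb (by norm_num) (by norm_num) (by positivity)] at this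
    have h2k' : Δ0 / ε ≤ (2:ℝ) ^ k := by rwa [Real.rpow_natCast] at h2k
    have hpow : (0:ℝ) < (2:ℝ) ^ k := by positivity
    have : Δ0 * (1/2)^k ≤ ε := by
      rw [div_le_iff₀ hε] at h2k'
      rw [one_div, inv_pow]
      rw [mul_inv_le_iff₀ hpow]
      linarith
    linarith [hgeo k]
  · -- total work bound
    have hAsplit : (2 * c * ((p : ℝ) + 1)) ^ (2 / (3 * (p : ℝ) + 1))
        * (Mp / σ) ^ (2 / (3 * (p : ℝ) + 1)) = A := by
      rw [hA, hB, ← Real.mul_rpow (by positivity) (by positivity)]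
      ring_nf
    rw [hAsplit]
    have hNle : ∀ i, (N i : ℝ) ≤ A + 1 := by
      intro i
      rw [hN i]
      have h1 : (⌈A⌉₊ : ℝ) ≤ A + 1 := (Nat.ceil_lt_add_one hApos.le).le
      have h2 : ((1:ℕ) : ℝ) ≤ A + 1 := by push_cast; linarith
      rcases le_total (⌈A⌉₊) 1 with h | h
      · rw [max_eq_right h]; exact h2
      · rw [max_eq_left h]; exact h1
    calc (∑ i ∈ Finset.range k, (N i : ℝ)) ≤ ∑ i ∈ Finset.range k, (A + 1) :=
          Finset.sum_le_sum fun i _ => hNle i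
      _ = (A + 1) * (k:ℝ) := by rw [Finset.sum_const, Finset.card_range]; ring
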